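/- arXiv:2304.14980 — 3 statements merged into one kernel-verified Lean document; each statement's English description precedes it below -/
import Mathlib

section
/- There exists an election with exactly 4 candidates and a candidate x such that x ≥_{5/8} y for every other candidate y, yet x is not ranked first in some 3-wise median of the election. (Hence the smallest α such that 'x ≥_α y for all y ≠ x implies x is ranked first in every 3-wise median' for 4-candidate elections satisfies α > 5/8.) -/
/-!
Three copies of the vote `1 ≻ 0 ≻ 2 ≻ 3` are padded with five votes so that candidate `0` beats
every other candidate in exactly five of the eight votes, whence `0 ≥_{5/8} y` for all `y ≠ 0`.
The repeated vote has 3-wise distance 39 to the profile, and an exhaustive check over all 24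
rankings shows that no ranking does better, so it is a 3-wise median that puts `1` above `0`.
-/

open Finset

/-- A ranking (strict total order) of the finite candidate set `C`, encoded as a
bijection with `Fin (Fintype.card C)`; position `0` is the top of the ranking. -/
abbrev Ranking (C : Type*) [Fintype C] := C ≃ Fin (Fintype.card C)

section Defs

variable {C : Type*} [Fintype C] [DecidableEq C]

/-- `x` is ranked (strictly) before `y` in the ranking `π`. -/
def Before (π : Ranking C) (x y : C) : Prop := π x < π y

instance (π : Ranking C) (x y : C) : Decidable (Before π x y) :=
  inferInstanceAs (Decidable (π x < π y))

instance : DecidableEq (Ranking C) := fun a b =>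
  decidable_of_iff (∀ i, a i = b i) Equiv.ext_iff.symm

/-- The top-ranked element of `S ⊆ C` according to `π` (`⊤` if `S = ∅`). -/
def topS (π : Ranking C) (S : Finset C) : WithTop C :=
  (S.image π).min.map (fun i => π.symm i)

/-- The `k`-wise Kendall-tau distance between two rankings: the number of subsets
`S ⊆ C` with `|S| ≤ k` on whose top element the two rankings disagree (subsets of
size at most one never contribute). -/
def kDist (k : ℕ) (π σ : Ranking C) : ℕ :=
  ((Finset.univ : Finset C).powerset.filter
    (fun S => S.card ≤ k ∧ topS π S ≠ topS σ S)).card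

/-- The `k`-wise Kendall-tau distance from a ranking to a voting profile. -/
def kDistV (k : ℕ) (π : Ranking C) (V : Multiset (Ranking C)) : ℕ :=
  (V.map (fun σ => kDist k π σ)).sum

/-- `π` is a `k`-wise median (for `k = 2`: a Kemeny ranking) of the profile `V`. -/
def IsKMedian (k : ℕ) (V : Multiset (Ranking C)) (π : Ranking C) : Prop :=
  ∀ σ : Ranking C, kDistV k π V ≤ kDistV k σ V

/-- The number of votes of `V` in which `x` is ranked before `y`. -/
def votesBefore (V : Multiset (Ranking C)) (x y : C) : ℕ :=
  Multiset.card (V.filter (fun v => Before v x y))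

/-- `x ≥ₛ y` : `x` is ranked before `y` in at least `s·|V|` of the votes. -/
def AtLeastRatio (V : Multiset (Ranking C)) (s : ℝ) (x y : C) : Prop :=
  s * (Multiset.card V : ℝ) ≤ (votesBefore V x y : ℝ)

/-- `x >ₛ y` : `x` is ranked before `y` in more than `s·|V|` of the votes. -/
def MoreThanRatio (V : Multiset (Ranking C)) (s : ℝ) (x y : C) : Prop :=
  s * (Multiset.card V : ℝ) < (votesBefore V x y : ℝ)

noncomputable instance (V : Multiset (Ranking C)) (s : ℝ) (x y : C) :
    Decidable (AtLeastRatio V s x y) :=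
  inferInstanceAs (Decidable (s * (Multiset.card V : ℝ) ≤ (votesBefore V x y : ℝ)))

/-- `x` is a non-dirty candidate w.r.t. threshold `s`. -/
def NonDirty (V : Multiset (Ranking C)) (s : ℝ) (x : C) : Prop :=
  ∀ y : C, y ≠ x → AtLeastRatio V s x y ∨ AtLeastRatio V s y x

/-- `x` is ranked first (is the winner) in the ranking `π`. -/
def RankedFirst (π : Ranking C) (x : C) : Prop :=
  ∀ y : C, y ≠ x → Before π x y

instance (π : Ranking C) (x : C) : Decidable (RankedFirst π x) :=
  inferInstanceAs (Decidable (∀ y : C, y ≠ x → Before π x y))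

end Defs

/-- The ranking that lists the candidates of `l` from top to bottom. -/
def Ranking.ofList {C : Type*} [Fintype C] [DecidableEq C] (l : List C) (hl : l.Nodup)
    (hC : ∀ x, x ∈ l) : Ranking C :=
  let e := hl.getEquivOfForallMemList l hC
  e.symm.trans (finCongr ((Fintype.card_fin _).symm.trans (Fintype.card_congr e)))

namespace FiveEighths

def medianRanking : Ranking (Fin 4) := .ofList [1, 0, 2, 3] (by decide) (by decide)

def profile : Multiset (Ranking (Fin 4)) :=
  {medianRanking, medianRanking, medianRanking,
    .ofList [2, 3, 0, 1] (by decide) (by decide), .ofList [3, 2, 0, 1] (by decide) (by decide),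
    .ofList [0, 1, 3, 2] (by decide) (by decide), .ofList [3, 0, 2, 1] (by decide) (by decide),
    .ofList [2, 0, 1, 3] (by decide) (by decide)}

theorem card_profile : Multiset.card profile = 8 := rfl

theorem votesBefore_profile_zero : ∀ y : Fin 4, y ≠ 0 → votesBefore profile 0 y = 5 := by
  decide

theorem atLeastRatio_profile_zero (y : Fin 4) (hy : y ≠ 0) :
    AtLeastRatio profile (5 / 8) 0 y := by
  rw [AtLeastRatio, card_profile, votesBefore_profile_zero y hy]
  norm_num

theorem kDistV_three_medianRanking : kDistV 3 medianRanking profile = 39 := by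
  decide

theorem le_kDistV_three_profile : ∀ σ : Ranking (Fin 4), 39 ≤ kDistV 3 σ profile := by
  decide

theorem isKMedian_three_medianRanking : IsKMedian 3 profile medianRanking := fun σ =>
  kDistV_three_medianRanking ▸ le_kDistV_three_profile σ

theorem not_rankedFirst_medianRanking_zero : ¬ RankedFirst medianRanking 0 := by
  decide

end FiveEighths

/-- there is a 4-candidate election and a candidate `x` with
`x ≥_{5/8} y` for every other `y`, yet `x` is not ranked first in some 3-wise median. -/
theorem stmt14 :
    ∃ (V : Multiset (Ranking (Fin 4))) (x : Fin 4),
      V ≠ 0 ∧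
      (∀ y : Fin 4, y ≠ x → AtLeastRatio V (5 / 8) x y) ∧
      ∃ π : Ranking (Fin 4), IsKMedian 3 V π ∧ ¬ RankedFirst π x :=
  open FiveEighths in
  ⟨profile, 0, by decide, atLeastRatio_profile_zero, medianRanking,
    isKMedian_three_medianRanking, not_rankedFirst_medianRanking_zero⟩
end

section
/- For every real number β with 0 < β < 2/3, there exists an election and a candidate x such that x is ranked before u in more than β·|V| votes for every other candidate u, yet x is not ranked first in any 3-wise median of the election. (Hence the smallest α such that 'x ≥_α y for all y ≠ x implies x is ranked first in every 3-wise median' satisfies 2/3 ≤ α ≤ 3/4.) -/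
open Finset

/-!
Take candidates `x`, `b` and `m ≥ 1` others `c`, and the profile with `m` votes `x ≻ b ≻ c…`,
`m + 2` votes `c… ≻ x ≻ b` and `m + 2` votes `b ≻ x ≻ c…`. Then `x` beats every other candidate
in `2m + 2` of the `3m + 4` votes, a fraction tending to `2/3`. If a ranking puts `x` first,
moving `b` to the front changes the top of a set only when the set contains `b`. On sets without
`x` this never hurts, since `b` tops such a set in the `2m + 2` votes of the first and last
blocks; on `{x, b}` it costs `m` disagreements, and on each of the `m` triples `{x, b, c}` it
saves `2`. So no ranking with `x` first is a 3-wise median.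
-/

namespace Multiset

theorem countP_replicate {α : Type*} (p : α → Prop) [DecidablePred p] (n : ℕ) (a : α) :
    (replicate n a).countP p = if p a then n else 0 := by
  induction n with
  | zero => simp
  | succ n ih => rw [replicate_succ, countP_cons, ih]; split_ifs <;> rfl

end Multiset

theorem Fin.cycleRange_lt_cycleRange_iff {n : ℕ} {i j k : Fin n} (hj : j ≠ i) (hk : k ≠ i) :
    cycleRange i j < cycleRange i k ↔ j < k := by
  have hval : ∀ l ≠ i, (cycleRange i l : ℕ) = if l < i then (l : ℕ) + 1 else l := by
    intro l hl
    rcases hl.lt_or_gt with h | h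
    · rw [coe_cycleRange_of_lt h, if_pos h]
    · rw [cycleRange_of_gt h, if_neg h.not_gt]
  have hj' := Fin.val_ne_of_ne hj
  have hk' := Fin.val_ne_of_ne hk
  rw [Fin.lt_def, Fin.lt_def, hval j hj, hval k hk]
  simp only [Fin.lt_def]
  split_ifs <;> omega

theorem Finset.sum_filter_card_le_three_mem_pair {C M : Type*} [Fintype C] [DecidableEq C]
    [AddCommMonoid M] {x b : C} (hxb : x ≠ b) (f : Finset C → M) :
    ∑ S ∈ (univ : Finset (Finset C)) with S.card ≤ 3 ∧ x ∈ S ∧ b ∈ S, f S =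
      f {x, b} + ∑ a ∈ {x, b}ᶜ, f {x, b, a} := by
  have hcard : ∀ a, a ≠ x → a ≠ b → ({x, b, a} : Finset C).card = 3 := fun a hax hab =>
    card_eq_three.mpr ⟨x, b, a, hxb, hax.symm, hab.symm, rfl⟩
  have hsets : {S ∈ (univ : Finset (Finset C)) | S.card ≤ 3 ∧ x ∈ S ∧ b ∈ S} =
      insert {x, b} (({x, b}ᶜ : Finset C).image fun a => {x, b, a}) := by
    ext S
    simp only [mem_filter, mem_univ, true_and, mem_insert, mem_image, mem_compl, mem_singleton,
      not_or]
    constructor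
    · rintro ⟨hS, hx, hb⟩
      have hpair : {x, b} ⊆ S := insert_subset hx (singleton_subset_iff.mpr hb)
      by_cases hsub : S ⊆ {x, b}
      · exact .inl (hsub.antisymm hpair)
      · obtain ⟨a, haS, ha⟩ := not_subset.mp hsub
        simp only [mem_insert, mem_singleton, not_or] at ha
        refine .inr ⟨a, ha, eq_of_subset_of_card_le ?_ (by rw [hcard a ha.1 ha.2]; exact hS)⟩
        exact insert_subset hx (insert_subset hb (singleton_subset_iff.mpr haS))
    · rintro (rfl | ⟨a, ha, rfl⟩)
      · exact ⟨card_le_two.trans (by norm_num), by simp, by simp⟩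
      · exact ⟨(hcard a ha.1 ha.2).le, by simp, by simp⟩
  rw [hsets, sum_insert, sum_image]
  · intro a ha a' _ heq
    have : a ∈ ({x, b, a'} : Finset C) := by
      rw [← show ({x, b, a} : Finset C) = {x, b, a'} from heq]
      simp
    simp only [coe_compl, Set.mem_compl_iff, mem_coe, mem_insert, mem_singleton, not_or] at ha this
    tauto
  · simp only [mem_image, mem_compl, not_exists, not_and]
    intro a ha heq
    exact ha (heq ▸ by simp)

section Rankings

variable {C : Type*} [Fintype C] {π σ : Ranking C} {S : Finset C}

theorem topS_eq_of_forall_before {z : C} (hz : z ∈ S) (h : ∀ y ∈ S, y ≠ z → Before π z y) :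
    topS π S = z := by
  have hmin : (S.image π).min = π z := by
    refine le_antisymm (min_le (mem_image_of_mem _ hz)) (Finset.le_min fun i hi => ?_)
    obtain ⟨y, hy, rfl⟩ := mem_image.mp hi
    rcases eq_or_ne y z with rfl | hyz
    · exact le_rfl
    · exact_mod_cast (h y hy hyz).le
  simp [topS, hmin]

theorem topS_eq_of_rankedFirst {z : C} (h : RankedFirst π z) (hz : z ∈ S) : topS π S = z :=
  topS_eq_of_forall_before hz fun y _ hy => h y hy

theorem topS_congr (h : ∀ y ∈ S, ∀ z ∈ S, Before π y z ↔ Before σ y z) :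
    topS π S = topS σ S := by
  rcases S.eq_empty_or_nonempty with rfl | hS
  · simp [topS]
  obtain ⟨z, hz, hmin⟩ := S.exists_min_image π hS
  have hbefore : ∀ y ∈ S, y ≠ z → Before π z y := fun y hy hyz =>
    lt_of_le_of_ne (hmin y hy) (π.injective.ne hyz.symm)
  rw [topS_eq_of_forall_before hz hbefore,
    topS_eq_of_forall_before hz fun y hy hyz => (h z hz y hy).mp (hbefore y hy hyz)]

def moveToFront (π : Ranking C) (b : C) : Ranking C :=
  π.trans (Fin.cycleRange (π b))

theorem rankedFirst_moveToFront (π : Ranking C) (b : C) : RankedFirst (moveToFront π b) b := by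
  intro y hy
  have h0 : (moveToFront π b b : ℕ) = 0 := by
    simp [moveToFront, Fin.coe_cycleRange_of_le le_rfl]
  have hne : (moveToFront π b y : ℕ) ≠ 0 := by
    rw [← h0]
    exact Fin.val_ne_of_ne ((moveToFront π b).injective.ne hy)
  rw [Before, Fin.lt_def]
  omega

theorem before_moveToFront_iff {b y z : C} (hy : y ≠ b) (hz : z ≠ b) :
    Before (moveToFront π b) y z ↔ Before π y z :=
  Fin.cycleRange_lt_cycleRange_iff (π.injective.ne hy) (π.injective.ne hz)

theorem topS_moveToFront_of_mem {b : C} (hb : b ∈ S) : topS (moveToFront π b) S = b :=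
  topS_eq_of_rankedFirst (rankedFirst_moveToFront π b) hb

theorem topS_moveToFront_of_notMem {b : C} (hb : b ∉ S) :
    topS (moveToFront π b) S = topS π S :=
  topS_congr fun _ hy _ hz => before_moveToFront_iff (ne_of_mem_of_not_mem hy hb)
    (ne_of_mem_of_not_mem hz hb)

def RanksFirstTwo (π : Ranking C) (x b : C) : Prop :=
  RankedFirst π x ∧ ∀ y, y ≠ x → y ≠ b → Before π b y

def RanksLastTwo (π : Ranking C) (x b : C) : Prop :=
  Before π x b ∧ ∀ y, y ≠ x → y ≠ b → Before π y x

theorem exists_ranksFirstTwo {x b : C} (hxb : x ≠ b) : ∃ π : Ranking C, RanksFirstTwo π x b := by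
  let σ := moveToFront (Fintype.equivFin C) b
  refine ⟨moveToFront σ x, rankedFirst_moveToFront σ x, fun y hyx hyb => ?_⟩
  exact (before_moveToFront_iff hxb.symm hyx).mpr (rankedFirst_moveToFront _ b y hyb)

theorem exists_ranksLastTwo {x b : C} (hxb : x ≠ b) : ∃ π : Ranking C, RanksLastTwo π x b := by
  obtain ⟨π, hfirst, hsecond⟩ := exists_ranksFirstTwo hxb.symm
  exact ⟨π.trans Fin.revPerm, Fin.rev_lt_rev.mpr (hfirst x hxb),
    fun y hyx hyb => Fin.rev_lt_rev.mpr (hsecond y hyb hyx)⟩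

theorem RanksFirstTwo.topS_eq_snd {x b : C} (h : RanksFirstTwo π x b) (hx : x ∉ S) (hb : b ∈ S) :
    topS π S = b :=
  topS_eq_of_forall_before hb fun y hy hyb => h.2 y (ne_of_mem_of_not_mem hy hx) hyb

variable [DecidableEq C]

theorem RanksLastTwo.topS_pair {x b : C} (h : RanksLastTwo π x b) : topS π {x, b} = x :=
  topS_eq_of_forall_before (mem_insert_self _ _) fun y hy hyx => by
    obtain rfl : y = b := by simpa [hyx] using hy
    exact h.1

theorem RanksLastTwo.topS_triple {x b a : C} (h : RanksLastTwo π x b) (hax : a ≠ x) (hab : a ≠ b) :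
    topS π {x, b, a} = a :=
  topS_eq_of_forall_before (by simp) fun y hy hya => by
    have hbefore : Before π a x := h.2 a hax hab
    simp only [mem_insert, mem_singleton] at hy
    rcases hy with rfl | rfl | rfl
    · exact hbefore
    · exact lt_trans hbefore h.1
    · exact absurd rfl hya

end Rankings

section Profile

variable {C : Type*} [Fintype C] {m : ℕ} {x b : C} {v₁ v₂ v₃ π : Ranking C}

def blockProfile (m : ℕ) (v₁ v₂ v₃ : Ranking C) : Multiset (Ranking C) :=
  .replicate m v₁ + .replicate (m + 2) v₂ + .replicate (m + 2) v₃

theorem card_blockProfile : Multiset.card (blockProfile m v₁ v₂ v₃) = 3 * m + 4 := by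
  simp only [blockProfile, Multiset.card_add, Multiset.card_replicate]
  ring

theorem countP_blockProfile (p : Ranking C → Prop) [DecidablePred p] :
    (blockProfile m v₁ v₂ v₃).countP p =
      (if p v₁ then m else 0) + (if p v₂ then m + 2 else 0) + (if p v₃ then m + 2 else 0) := by
  simp only [blockProfile, Multiset.countP_add, Multiset.countP_replicate]

theorem votesBefore_blockProfile (h₁ : RanksFirstTwo v₁ x b) (h₂ : RanksLastTwo v₂ x b)
    (h₃ : RanksFirstTwo v₃ b x) {u : C} (hux : u ≠ x) :
    votesBefore (blockProfile m v₁ v₂ v₃) x u = 2 * m + 2 := by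
  rw [votesBefore, ← Multiset.countP_eq_card_filter, countP_blockProfile, if_pos (h₁.1 u hux)]
  by_cases hub : u = b
  · subst hub
    rw [if_pos h₂.1, if_neg (show ¬Before v₃ x u from lt_asymm (h₃.1 x hux.symm))]
    ring
  · rw [if_neg (show ¬Before v₂ x u from lt_asymm (h₂.2 u hux hub)), if_pos (h₃.2 u hub hux)]
    ring

variable [DecidableEq C]

def topDisagreements (V : Multiset (Ranking C)) (π : Ranking C) (S : Finset C) : ℕ :=
  V.countP fun σ => topS π S ≠ topS σ S

theorem kDistV_eq_sum_topDisagreements (k : ℕ) (π : Ranking C) (V : Multiset (Ranking C)) :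
    kDistV k π V = ∑ S ∈ univ with S.card ≤ k, topDisagreements V π S := by
  induction V using Multiset.induction_on with
  | empty => simp [kDistV, topDisagreements]
  | cons σ V ih =>
    rw [kDistV, Multiset.map_cons, Multiset.sum_cons, ← kDistV, ih, kDist, powerset_univ,
      ← filter_filter, card_filter, ← sum_add_distrib]
    exact sum_congr rfl fun S _ => by
      rw [topDisagreements, topDisagreements, Multiset.countP_cons, add_comm]

theorem topDisagreements_moveToFront_le (h₁ : RanksFirstTwo v₁ x b) (h₃ : RanksFirstTwo v₃ b x)
    {S : Finset C} (hS : ¬(x ∈ S ∧ b ∈ S)) :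
    topDisagreements (blockProfile m v₁ v₂ v₃) (moveToFront π b) S ≤
      topDisagreements (blockProfile m v₁ v₂ v₃) π S := by
  by_cases hb : b ∈ S
  · have hx : x ∉ S := fun hx => hS ⟨hx, hb⟩
    simp only [topDisagreements, countP_blockProfile, topS_moveToFront_of_mem hb,
      h₁.topS_eq_snd hx hb, topS_eq_of_rankedFirst h₃.1 hb]
    by_cases hπ : topS π S = b
    · rw [hπ]
    · simp only [ne_eq, not_true_eq_false, if_false, hπ, not_false_eq_true, if_true]
      split_ifs <;> omega
  · rw [topDisagreements, topDisagreements, topS_moveToFront_of_notMem hb]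

theorem topDisagreements_pair_add (hxb : x ≠ b) (h₁ : RanksFirstTwo v₁ x b)
    (h₂ : RanksLastTwo v₂ x b) (h₃ : RanksFirstTwo v₃ b x) (hπ : RankedFirst π x) :
    topDisagreements (blockProfile m v₁ v₂ v₃) π {x, b} + m =
      topDisagreements (blockProfile m v₁ v₂ v₃) (moveToFront π b) {x, b} := by
  simp only [topDisagreements, countP_blockProfile, topS_eq_of_rankedFirst hπ (mem_insert_self _ _),
    topS_moveToFront_of_mem (mem_insert_of_mem (mem_singleton_self b)),
    topS_eq_of_rankedFirst h₁.1 (mem_insert_self _ _), h₂.topS_pair,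
    topS_eq_of_rankedFirst h₃.1 (mem_insert_of_mem (mem_singleton_self b)), ne_eq,
    WithTop.coe_inj, hxb, hxb.symm, not_true_eq_false, not_false_eq_true, ↓reduceIte]
  ring

theorem topDisagreements_triple_add (hxb : x ≠ b) (h₁ : RanksFirstTwo v₁ x b)
    (h₂ : RanksLastTwo v₂ x b) (h₃ : RanksFirstTwo v₃ b x) (hπ : RankedFirst π x) {a : C}
    (hax : a ≠ x) (hab : a ≠ b) :
    topDisagreements (blockProfile m v₁ v₂ v₃) (moveToFront π b) {x, b, a} + 2 =
      topDisagreements (blockProfile m v₁ v₂ v₃) π {x, b, a} := by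
  simp only [topDisagreements, countP_blockProfile, topS_eq_of_rankedFirst hπ (mem_insert_self _ _),
    topS_moveToFront_of_mem (by simp : b ∈ ({x, b, a} : Finset C)),
    topS_eq_of_rankedFirst h₁.1 (mem_insert_self _ _), h₂.topS_triple hax hab,
    topS_eq_of_rankedFirst h₃.1 (by simp : b ∈ ({x, b, a} : Finset C)), ne_eq,
    WithTop.coe_inj, hxb, hxb.symm, hab.symm, hax.symm, not_true_eq_false, not_false_eq_true,
    ↓reduceIte]
  ring

theorem kDistV_moveToFront_lt (hxb : x ≠ b) (hcard : Fintype.card C = m + 2) (hm : 0 < m)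
    (h₁ : RanksFirstTwo v₁ x b) (h₂ : RanksLastTwo v₂ x b) (h₃ : RanksFirstTwo v₃ b x)
    (hπ : RankedFirst π x) :
    kDistV 3 (moveToFront π b) (blockProfile m v₁ v₂ v₃) <
      kDistV 3 π (blockProfile m v₁ v₂ v₃) := by
  set V := blockProfile m v₁ v₂ v₃
  have hothers : ({x, b}ᶜ : Finset C).card = m := by
    rw [card_compl, card_pair hxb, hcard, Nat.add_sub_cancel]
  have htriples : ∑ a ∈ {x, b}ᶜ, topDisagreements V (moveToFront π b) {x, b, a} + 2 * m =
      ∑ a ∈ {x, b}ᶜ, topDisagreements V π {x, b, a} := by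
    rw [← sum_congr rfl fun a ha => topDisagreements_triple_add hxb h₁ h₂ h₃ hπ
      (ne_of_mem_of_not_mem (mem_insert_self x {b}) (mem_compl.mp ha)).symm
      (ne_of_mem_of_not_mem (mem_insert_of_mem (mem_singleton_self b)) (mem_compl.mp ha)).symm,
      sum_add_distrib, sum_const, hothers, smul_eq_mul, mul_comm]
  have hpair : topDisagreements V π {x, b} + m = topDisagreements V (moveToFront π b) {x, b} :=
    topDisagreements_pair_add hxb h₁ h₂ h₃ hπ
  have hrest :
      ∑ S ∈ univ with S.card ≤ 3 ∧ ¬(x ∈ S ∧ b ∈ S), topDisagreements V (moveToFront π b) S ≤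
        ∑ S ∈ univ with S.card ≤ 3 ∧ ¬(x ∈ S ∧ b ∈ S), topDisagreements V π S :=
    sum_le_sum fun S hS => topDisagreements_moveToFront_le h₁ h₃ (mem_filter.mp hS).2.2
  rw [kDistV_eq_sum_topDisagreements, kDistV_eq_sum_topDisagreements,
    ← sum_filter_add_sum_filter_not _ (fun S => x ∈ S ∧ b ∈ S) (topDisagreements V π),
    ← sum_filter_add_sum_filter_not _ (fun S => x ∈ S ∧ b ∈ S)
      (topDisagreements V (moveToFront π b)),
    filter_filter, filter_filter, sum_filter_card_le_three_mem_pair hxb,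
    sum_filter_card_le_three_mem_pair hxb]
  omega

end Profile

theorem exists_pos_nat_mul_lt_two_mul_add_two {β : ℝ} (hβ : β < 2 / 3) :
    ∃ m : ℕ, 0 < m ∧ β * (3 * m + 4) < 2 * m + 2 := by
  have hgap : 0 < 2 - 3 * β := by linarith
  obtain ⟨m, hm⟩ := exists_nat_gt (1 / (2 - 3 * β))
  have hm' : 1 < m * (2 - 3 * β) := by rwa [div_lt_iff₀ hgap] at hm
  refine ⟨m, ?_, by nlinarith⟩
  exact_mod_cast (one_div_pos.mpr hgap).trans hm

theorem stmt15_general (β : ℝ) (hβ1 : β < 2 / 3) :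
    ∃ (n : ℕ) (V : Multiset (Ranking (Fin n))) (x : Fin n),
      V ≠ 0 ∧
      (∀ u : Fin n, u ≠ x → MoreThanRatio V β x u) ∧
      ∀ π : Ranking (Fin n), IsKMedian 3 V π → ¬ RankedFirst π x := by
  obtain ⟨m, hm, hβm⟩ := exists_pos_nat_mul_lt_two_mul_add_two hβ1
  have hxb : (0 : Fin (m + 2)) ≠ 1 := zero_ne_one
  obtain ⟨v₁, h₁⟩ := exists_ranksFirstTwo hxb
  obtain ⟨v₂, h₂⟩ := exists_ranksLastTwo hxb
  obtain ⟨v₃, h₃⟩ := exists_ranksFirstTwo hxb.symm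
  refine ⟨m + 2, blockProfile m v₁ v₂ v₃, 0, ?_, fun u hu => ?_, fun π hmed hπ => ?_⟩
  · rw [← Multiset.card_pos, card_blockProfile]
    omega
  · rw [MoreThanRatio, card_blockProfile, votesBefore_blockProfile h₁ h₂ h₃ hu]
    push_cast
    linarith
  · exact (kDistV_moveToFront_lt hxb (Fintype.card_fin _) hm h₁ h₂ h₃ hπ).not_ge (hmed _)

/-- for every `0 < β < 2/3` there is an election and a candidate `x`
beating every other candidate in more than `β·|V|` of the votes yet not ranked first
in any 3-wise median. -/
theorem stmt15 (β : ℝ) (hβ0 : 0 < β) (hβ1 : β < 2 / 3) :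
    ∃ (n : ℕ) (V : Multiset (Ranking (Fin n))) (x : Fin n),
      V ≠ 0 ∧
      (∀ u : Fin n, u ≠ x → MoreThanRatio V β x u) ∧
      ∀ π : Ranking (Fin n), IsKMedian 3 V π → ¬ RankedFirst π x :=
  stmt15_general β hβ1
end

section
/- Let x be a non-dirty candidate with respect to threshold 5/6 in an election, and let I = {z ≠ x : z ≥_{5/6} x}. Let r be a 3-wise median of the election such that z is ranked before x in r for all z ∈ I. Suppose |I|·(|I| − 4) ≤ 3·|{z : x is ranked before z in r}|. Then for every candidate y ≠ x with x ≥_{5/6} y, x is ranked before y in r. -/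
open Finset

/-!
Suppose some `y` with `x ≥_{5/6} y` is ranked before `x` in `r`, and let `d` be the last
candidate before `x` in `r` outside `I`, so that the set `J` of candidates strictly between `d`
and `x` lies in `I`. Moving `d` to just after `x` changes the top element only of the sets
`{d, t}` and `{d, t, u}` with `t ∈ J ∪ {x}` and `u` after `t`, and the `5/6`-majorities bound
the change of the number of disagreeing votes on each of them. Summing up, the median property
of `r` forces `4|J| + 4 + 3|A| ≤ |J|(|J| - 1)`, where `A` is the set of candidates after `x`;
this contradicts `|I|(|I| - 4) ≤ 3|A|` because `|J| ≤ |I|`.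
-/

namespace Fin

theorem val_cycleIcc {n : ℕ} {i j : Fin n} (hij : i ≤ j) (k : Fin n) :
    (cycleIcc i j k : ℕ) =
      if k < i ∨ j < k then (k : ℕ) else if k = j then (i : ℕ) else k + 1 := by
  have : NeZero n := NeZero.of_pos i.pos
  rcases lt_or_ge k i with hki | hik
  · simp [cycleIcc_of_lt hki, hki]
  rcases lt_or_ge j k with hjk | hkj
  · simp [cycleIcc_of_gt hjk, hjk]
  rcases eq_or_lt_of_le hkj with rfl | hkj
  · simp [cycleIcc_of_last hij, not_lt.2 hik]
  rw [cycleIcc_of_ge_of_lt hik hkj, if_neg (by simp [not_lt.2 hik, not_lt.2 hkj.le]),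
    if_neg hkj.ne, val_add, val_one', Nat.add_mod_mod, Nat.mod_eq_of_lt (by omega)]

theorem cycleIcc_lt_cycleIcc_iff {n : ℕ} {i j k l : Fin n} (hij : i ≤ j) (hk : k ≠ j)
    (hl : l ≠ j) : cycleIcc i j k < cycleIcc i j l ↔ k < l := by
  simp only [lt_def, val_cycleIcc hij, le_def, ne_eq, Fin.ext_iff] at *
  split_ifs <;> omega

theorem cycleIcc_le_right_iff {n : ℕ} {i j k : Fin n} (hij : i ≤ j) (hk : k ≠ j) :
    cycleIcc i j k ≤ j ↔ k < j := by
  simp only [lt_def, val_cycleIcc hij, le_def, ne_eq, Fin.ext_iff] at *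
  split_ifs <;> omega

end Fin

section Rankings

variable {C : Type*} [Fintype C]

theorem Before.irrefl (π : Ranking C) (a : C) : ¬ Before π a a := lt_irrefl _

theorem Before.trans {π : Ranking C} {a b c : C} (hab : Before π a b) (hbc : Before π b c) :
    Before π a c := lt_trans hab hbc

theorem Before.asymm {π : Ranking C} {a b : C} (h : Before π a b) : ¬ Before π b a :=
  lt_asymm h

theorem Before.ne {π : Ranking C} {a b : C} (h : Before π a b) : a ≠ b :=
  fun hab => Before.irrefl π a (hab ▸ h)

theorem before_or_before_of_ne (π : Ranking C) {a b : C} (hab : a ≠ b) :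
    Before π a b ∨ Before π b a :=
  lt_or_gt_of_ne (π.injective.ne hab)

theorem not_before_iff (π : Ranking C) {a b : C} (hab : a ≠ b) :
    ¬ Before π a b ↔ Before π b a :=
  ⟨fun h => (before_or_before_of_ne π hab).resolve_left h, Before.asymm⟩

theorem topS_empty (π : Ranking C) : topS π ∅ = ⊤ := by
  simp [topS]

theorem topS_eq_coe_of_forall_before {π : Ranking C} {S : Finset C} {c : C} (hc : c ∈ S)
    (hmin : ∀ b ∈ S, b ≠ c → Before π c b) : topS π S = c := by
  have hle : ∀ b ∈ S, π c ≤ π b := fun b hb =>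
    (eq_or_ne b c).elim (fun h => h ▸ le_rfl) (fun h => (hmin b hb h).le)
  have : (S.image π).min = π c :=
    le_antisymm (Finset.min_le (mem_image_of_mem π hc)) <| Finset.le_min fun i hi => by
      obtain ⟨b, hb, rfl⟩ := mem_image.1 hi
      exact_mod_cast hle b hb
  simp [topS, this]

theorem exists_topS_eq (π : Ranking C) {S : Finset C} (hS : S.Nonempty) :
    ∃ c ∈ S, topS π S = c ∧ ∀ b ∈ S, b ≠ c → Before π c b := by
  obtain ⟨c, hc, hmin⟩ := S.exists_min_image π hS
  have hmin' : ∀ b ∈ S, b ≠ c → Before π c b := fun b hb hbc =>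
    lt_of_le_of_ne (hmin b hb) (π.injective.ne hbc.symm)
  exact ⟨c, hc, topS_eq_coe_of_forall_before hc hmin', hmin'⟩

theorem topS_eq_coe_iff {π : Ranking C} {S : Finset C} {c : C} :
    topS π S = c ↔ c ∈ S ∧ ∀ b ∈ S, b ≠ c → Before π c b := by
  refine ⟨fun h => ?_, fun h => topS_eq_coe_of_forall_before h.1 h.2⟩
  rcases S.eq_empty_or_nonempty with rfl | hS
  · simp [topS_empty] at h
  obtain ⟨c', hc', htop, hmin⟩ := exists_topS_eq π hS
  obtain rfl : c' = c := WithTop.coe_injective (htop.symm.trans h)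
  exact ⟨hc', hmin⟩

end Rankings

theorem Multiset.card_filter_exists_le {α β : Type*} [DecidableEq β] (V : Multiset α)
    (s : Finset β) (p : β → α → Prop) [∀ b, DecidablePred (p b)] :
    Multiset.card (V.filter fun v => ∃ b ∈ s, p b v) ≤
      ∑ b ∈ s, Multiset.card (V.filter (p b)) := by
  induction s using Finset.induction_on with
  | empty => simp
  | insert a s ha ih =>
    rw [Finset.sum_insert ha]
    calc Multiset.card (V.filter fun v => ∃ b ∈ insert a s, p b v)
        = Multiset.card (V.filter fun v => p a v ∨ ∃ b ∈ s, p b v) := by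
          simp only [Finset.exists_mem_insert]
      _ ≤ Multiset.card (V.filter (p a)) +
            Multiset.card (V.filter fun v => ∃ b ∈ s, p b v) := by
          rw [← Multiset.card_add, Multiset.filter_add_filter, Multiset.card_add]
          exact Nat.le_add_right _ _
      _ ≤ _ := by gcongr

section Votes

variable {C : Type*} [Fintype C] (V : Multiset (Ranking C))

theorem votesBefore_add_votesBefore {a b : C} (hab : a ≠ b) :
    votesBefore V a b + votesBefore V b a = Multiset.card V := by
  have : V.filter (fun σ => Before σ b a) = V.filter (fun σ => ¬ Before σ a b) :=
    Multiset.filter_congr fun σ _ => (not_before_iff σ hab).symm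
  rw [votesBefore, votesBefore, this, ← Multiset.card_add, Multiset.filter_add_not]

theorem votesBefore_le_add (a b c : C) :
    votesBefore V a b ≤ votesBefore V a c + votesBefore V c b := by
  unfold votesBefore
  calc Multiset.card (V.filter fun σ => Before σ a b)
      ≤ Multiset.card (V.filter fun σ => Before σ a c ∨ Before σ c b) :=
        Multiset.card_le_card <| Multiset.monotone_filter_right V fun σ h =>
          (lt_or_ge (σ a) (σ c)).imp id fun h' => lt_of_le_of_lt h' h
    _ ≤ _ := by
        rw [← Multiset.card_add, Multiset.filter_add_filter, Multiset.card_add]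
        exact Nat.le_add_right _ _

theorem six_mul_votesBefore_le_of_atLeastRatio {a b : C} (hab : a ≠ b)
    (h : AtLeastRatio V (5 / 6) a b) :
    6 * votesBefore V b a ≤ Multiset.card V := by
  have hsum : (votesBefore V a b : ℝ) + votesBefore V b a = Multiset.card V := by
    exact_mod_cast votesBefore_add_votesBefore V hab
  unfold AtLeastRatio at h
  have : (6 * votesBefore V b a : ℝ) ≤ Multiset.card V := by linarith
  exact_mod_cast this

theorem not_atLeastRatio_of_atLeastRatio (hV : V ≠ 0) {a b : C} (hab : a ≠ b)
    (h : AtLeastRatio V (5 / 6) a b) :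
    ¬ AtLeastRatio V (5 / 6) b a := fun h' => by
  have := six_mul_votesBefore_le_of_atLeastRatio V hab h
  have := six_mul_votesBefore_le_of_atLeastRatio V hab.symm h'
  have := votesBefore_add_votesBefore V hab
  have := Multiset.card_pos.2 hV
  omega

variable [DecidableEq C]

def disagreements (π : Ranking C) (S : Finset C) : ℕ :=
  Multiset.card (V.filter fun σ => topS σ S ≠ topS π S)

theorem kDistV_eq_sum_disagreements (k : ℕ) (π : Ranking C) :
    kDistV k π V = ∑ S ∈ univ.powerset.filter (·.card ≤ k), disagreements V π S := by
  induction V using Multiset.induction_on with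
  | empty => simp [kDistV, disagreements]
  | cons σ V ih =>
    rw [kDistV, Multiset.map_cons, Multiset.sum_cons, ← kDistV, ih, kDist]
    simp only [disagreements, Multiset.filter_cons, Multiset.card_add, Finset.sum_add_distrib]
    rw [← Finset.filter_filter, Finset.card_filter]
    congr 1
    refine Finset.sum_congr rfl fun S _ => ?_
    split_ifs <;> simp_all [ne_comm]

theorem disagreements_le_card (π : Ranking C) (S : Finset C) :
    disagreements V π S ≤ Multiset.card V :=
  Multiset.card_le_card (Multiset.filter_le _ V)

theorem disagreements_le_sum_votesBefore {π : Ranking C} {S s : Finset C} {c : C}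
    (hc : topS π S = c) (hS : S ⊆ insert c s) :
    disagreements V π S ≤ ∑ b ∈ s, votesBefore V b c := by
  refine le_trans (Multiset.card_le_card <| Multiset.monotone_filter_right V fun σ hσ => ?_)
    (Multiset.card_filter_exists_le V s fun b σ => Before σ b c)
  obtain ⟨hcS, -⟩ := topS_eq_coe_iff.1 hc
  obtain ⟨t, htS, htop, hmin⟩ := exists_topS_eq σ ⟨c, hcS⟩
  have htc : t ≠ c := fun h => hσ (by rw [htop, h, hc])
  exact ⟨t, (mem_insert.1 (hS htS)).resolve_left htc, hmin c hcS htc.symm⟩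

theorem card_le_disagreements_add_votesBefore {π : Ranking C} {S : Finset C} {b c : C}
    (hc : topS π S = c) (hb : b ∈ S) (hbc : b ≠ c) :
    Multiset.card V ≤ disagreements V π S + votesBefore V c b := by
  calc Multiset.card V
      = disagreements V π S + Multiset.card (V.filter fun σ => ¬ topS σ S ≠ topS π S) := by
        rw [disagreements, ← Multiset.card_add, Multiset.filter_add_not]
    _ ≤ _ := Nat.add_le_add_left (Multiset.card_le_card <| Multiset.monotone_filter_right V
        fun σ hσ => ?_) _
  rw [not_not, hc, topS_eq_coe_iff] at hσ
  exact hσ.2 b hb hbc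

end Votes

section Move

variable {C : Type*} [Fintype C]

/-- Move `d` to the position of `x`, shifting everything strictly after `d` up to `x` one step
to the front; when `d` is before `x` this places `d` immediately after `x`. -/
def moveAfter (r : Ranking C) (d x : C) : Ranking C :=
  r.trans (Fin.cycleIcc (r d) (r x)).symm

variable {r : Ranking C} {d x : C}

theorem moveAfter_apply_moved (h : Before r d x) : moveAfter r d x d = r x := by
  have : NeZero (Fintype.card C) := NeZero.of_pos (r d).pos
  simp [moveAfter, Equiv.symm_apply_eq, Fin.cycleIcc_of_last h.le]

theorem moveAfter_apply_ne (h : Before r d x) {c : C} (hc : c ≠ d) :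
    moveAfter r d x c ≠ r x := by
  rw [← moveAfter_apply_moved h]
  exact (moveAfter r d x).injective.ne hc

theorem cycleIcc_moveAfter (c : C) : Fin.cycleIcc (r d) (r x) (moveAfter r d x c) = r c := by
  simp [moveAfter]

theorem before_moveAfter_iff (h : Before r d x) {b c : C} (hb : b ≠ d) (hc : c ≠ d) :
    Before (moveAfter r d x) b c ↔ Before r b c := by
  unfold Before
  rw [← Fin.cycleIcc_lt_cycleIcc_iff h.le (moveAfter_apply_ne h hb) (moveAfter_apply_ne h hc),
    cycleIcc_moveAfter, cycleIcc_moveAfter]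

theorem before_moveAfter_moved_iff (h : Before r d x) {c : C} (hc : c ≠ d) :
    Before (moveAfter r d x) c d ↔ ¬ Before r x c := by
  unfold Before
  rw [moveAfter_apply_moved h, ← Fin.cycleIcc_le_right_iff h.le (moveAfter_apply_ne h hc),
    cycleIcc_moveAfter, not_lt]

theorem moved_before_moveAfter_iff (h : Before r d x) {c : C} (hc : c ≠ d) :
    Before (moveAfter r d x) d c ↔ Before r x c := by
  rw [← not_before_iff _ hc, before_moveAfter_moved_iff h hc, not_not]

end Move

theorem Finset.eq_pair_or_eq_triple_of_card_le_three {α : Type*} [DecidableEq α] {s : Finset α}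
    {a b : α} (hs : s.card ≤ 3) (ha : a ∈ s) (hb : b ∈ s) (hab : a ≠ b) :
    s = {a, b} ∨ ∃ c ∈ s, c ≠ a ∧ c ≠ b ∧ s = {a, b, c} := by
  have : Nonempty α := ⟨a⟩
  have hbs : b ∈ s.erase a := mem_erase.2 ⟨hab.symm, hb⟩
  have hs' : s = insert a (insert b ((s.erase a).erase b)) := by
    rw [insert_erase hbs, insert_erase ha]
  have hR : ((s.erase a).erase b).card ≤ 1 := by
    rw [card_erase_of_mem hbs, card_erase_of_mem ha]
    omega
  obtain ⟨c, hc⟩ := card_le_one_iff_subset_singleton.1 hR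
  rcases subset_singleton_iff.1 hc with hR | hR
  · exact Or.inl (by rwa [hR] at hs')
  · have hcR : c ∈ (s.erase a).erase b := hR ▸ mem_singleton_self c
    simp only [mem_erase] at hcR
    exact Or.inr ⟨c, hcR.2.2, hcR.2.1, hcR.1, by rwa [hR] at hs'⟩

section MoveTop

variable {C : Type*} [Fintype C] {r : Ranking C} {d x : C}

theorem topS_moveAfter_of_ne (h : Before r d x) {S : Finset C} {w : C} (hw : topS r S = w)
    (hwd : w ≠ d) : topS (moveAfter r d x) S = w := by
  rw [topS_eq_coe_iff] at hw ⊢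
  refine ⟨hw.1, fun b hb hbw => ?_⟩
  have hwb := hw.2 b hb hbw
  rcases eq_or_ne b d with rfl | hbd
  · exact (before_moveAfter_moved_iff h hwd).2 (hwb.trans h).asymm
  · exact (before_moveAfter_iff h hwd hbd).2 hwb

theorem topS_moveAfter_of_forall_after (h : Before r d x) {S : Finset C} (hd : d ∈ S)
    (hS : ∀ b ∈ S, b ≠ d → Before r x b) : topS (moveAfter r d x) S = d :=
  topS_eq_coe_iff.2 ⟨hd, fun b hb hbd => (moved_before_moveAfter_iff h hbd).2 (hS b hb hbd)⟩

theorem topS_moveAfter_eq_of_not_before (h : Before r d x) {S : Finset C} {t : C} (ht : t ∈ S)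
    (htd : t ≠ d) (hxt : ¬ Before r x t)
    (hS : ∀ b ∈ S, b ≠ d → b ≠ t → Before r t b) :
    topS (moveAfter r d x) S = t := by
  refine topS_eq_coe_iff.2 ⟨ht, fun b hb hbt => ?_⟩
  rcases eq_or_ne b d with rfl | hbd
  · exact (before_moveAfter_moved_iff h htd).2 hxt
  · exact (before_moveAfter_iff h htd hbd).2 (hS b hb hbd hbt)

variable [DecidableEq C]

theorem exists_eq_of_topS_moveAfter_ne (h : Before r d x) {S : Finset C} (hS : S.card ≤ 3)
    (hne : topS (moveAfter r d x) S ≠ topS r S) :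
    ∃ t, (Before r d t ∧ ¬ Before r x t) ∧
      (S = {d, t} ∨ ∃ u, Before r t u ∧ S = {d, t, u}) := by
  rcases S.eq_empty_or_nonempty with rfl | hSne
  · simp [topS_empty] at hne
  obtain ⟨w, hwS, hw, hwmin⟩ := exists_topS_eq r hSne
  obtain rfl : w = d := by
    by_contra hwd
    exact hne (by rw [topS_moveAfter_of_ne h hw hwd, hw])
  have hT : (S.erase w).Nonempty := by
    by_contra hT
    refine hne ((topS_moveAfter_of_forall_after h hwS fun b hb hbw => ?_).trans hw.symm)
    exact absurd ⟨b, mem_erase.2 ⟨hbw, hb⟩⟩ hT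
  obtain ⟨t, htT, -, htmin⟩ := exists_topS_eq r hT
  obtain ⟨htw, htS⟩ := mem_erase.1 htT
  have hafter : ∀ b ∈ S, b ≠ w → b ≠ t → Before r t b := fun b hb hbw hbt =>
    htmin b (mem_erase.2 ⟨hbw, hb⟩) hbt
  have hxt : ¬ Before r x t := by
    intro hxt
    refine hne ((topS_moveAfter_of_forall_after h hwS fun b hb hbw => ?_).trans hw.symm)
    rcases eq_or_ne b t with rfl | hbt
    · exact hxt
    · exact hxt.trans (hafter b hb hbw hbt)
  refine ⟨t, ⟨hwmin t htS htw, hxt⟩, ?_⟩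
  rcases Finset.eq_pair_or_eq_triple_of_card_le_three hS hwS htS htw.symm with
    hS2 | ⟨u, hu, huw, hut, hS3⟩
  · exact Or.inl hS2
  · exact Or.inr ⟨u, hafter u hu huw hut, hS3⟩

end MoveTop

theorem Finset.sum_card_filter_lt_eq_choose_two {ι α : Type*} [DecidableEq ι] [LinearOrder α]
    {f : ι → α} (hf : Function.Injective f) (s : Finset ι) :
    ∑ a ∈ s, (s.filter fun b => f a < f b).card = s.card.choose 2 := by
  induction s using Finset.induction_on_max_value f with
  | empty => simp
  | insert m s hm hmax ih =>
    have hlt : ∀ a ∈ s, f a < f m := fun a ha =>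
      lt_of_le_of_ne (hmax a ha) (hf.ne fun h => hm (h ▸ ha))
    rw [sum_insert hm, filter_insert, if_neg (lt_irrefl _), filter_eq_empty_iff.2
      fun a ha => (hlt a ha).asymm, card_empty, zero_add, card_insert_of_notMem hm,
      Nat.choose_succ_succ, Nat.choose_one_right, ← ih, add_comm (#s), card_eq_sum_ones s,
      ← sum_add_distrib]
    refine sum_congr rfl fun a ha => ?_
    rw [filter_insert, if_pos (hlt a ha), card_insert_of_notMem fun h => hm (mem_filter.1 h).1]

section Cost

variable {C : Type*} [Fintype C] [DecidableEq C] {V : Multiset (Ranking C)} {r : Ranking C}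
  {d x : C}

theorem topS_moveAfter_pair (h : Before r d x) {t : C} (hdt : Before r d t)
    (hxt : ¬ Before r x t) : topS (moveAfter r d x) {d, t} = t :=
  topS_moveAfter_eq_of_not_before h (by simp) hdt.ne.symm hxt (by simp +contextual)

theorem topS_moveAfter_triple (h : Before r d x) {t u : C} (hdt : Before r d t)
    (hxt : ¬ Before r x t) (htu : Before r t u) : topS (moveAfter r d x) {d, t, u} = t :=
  topS_moveAfter_eq_of_not_before h (by simp) hdt.ne.symm hxt
    (by simp +contextual [htu])

theorem sum_eq_sum_pair_add_sum_triple (h : Before r d x) (f : Finset C → ℤ)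
    (hf : ∀ S, topS (moveAfter r d x) S = topS r S → f S = 0) :
    ∑ S ∈ univ.powerset.filter (·.card ≤ 3), f S =
      ∑ t ∈ univ.filter (fun t => Before r d t ∧ ¬ Before r x t),
        (f {d, t} + ∑ u ∈ univ.filter (Before r t), f {d, t, u}) := by
  set K := univ.filter (fun t => Before r d t ∧ ¬ Before r x t)
  set B : C → Finset (Finset C) := fun t => insert {d, t} ((univ.filter (Before r t)).image
    fun u => {d, t, u})
  have htop : ∀ t ∈ K, ∀ S ∈ B t, topS (moveAfter r d x) S = t := by
    intro t ht S hS
    obtain ⟨hdt, hxt⟩ := (mem_filter.1 ht).2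
    rcases mem_insert.1 hS with rfl | hS
    · exact topS_moveAfter_pair h hdt hxt
    · obtain ⟨u, hu, rfl⟩ := mem_image.1 hS
      exact topS_moveAfter_triple h hdt hxt (mem_filter.1 hu).2
  have hsub : K.biUnion B ⊆ univ.powerset.filter (·.card ≤ 3) := by
    intro S hS
    obtain ⟨t, -, hS⟩ := mem_biUnion.1 hS
    refine mem_filter.2 ⟨mem_powerset.2 (subset_univ S), ?_⟩
    rcases mem_insert.1 hS with rfl | hS
    · exact card_le_two.trans (by norm_num)
    · obtain ⟨u, -, rfl⟩ := mem_image.1 hS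
      exact card_le_three
  have hzero : ∀ S ∈ univ.powerset.filter (·.card ≤ 3), S ∉ K.biUnion B → f S = 0 := by
    intro S hS hSB
    refine hf S (not_not.1 fun hne => hSB ?_)
    obtain ⟨t, ht, hS | ⟨u, htu, hS⟩⟩ :=
      exists_eq_of_topS_moveAfter_ne h (mem_filter.1 hS).2 hne
    · exact mem_biUnion.2 ⟨t, by simpa [K] using ht, hS ▸ mem_insert_self _ _⟩
    · exact mem_biUnion.2 ⟨t, by simpa [K] using ht,
        mem_insert_of_mem (mem_image.2 ⟨u, by simpa using htu, hS.symm⟩)⟩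
  rw [← sum_subset hsub hzero, sum_biUnion fun t ht t' ht' htt' =>
    disjoint_left.2 fun S hS hS' =>
      htt' (WithTop.coe_injective ((htop t ht S hS).symm.trans (htop t' ht' S hS')))]
  refine sum_congr rfl fun t ht => ?_
  obtain ⟨hdt, -⟩ := (mem_filter.1 ht).2
  have hu : ∀ u ∈ univ.filter (Before r t), u ≠ d ∧ u ≠ t := fun u hu =>
    have htu : Before r t u := (mem_filter.1 hu).2
    ⟨(hdt.trans htu).ne.symm, htu.ne.symm⟩
  rw [sum_insert, sum_image]
  · intro u hu' v _ (huv : ({d, t, u} : Finset C) = {d, t, v})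
    have : u ∈ ({d, t, v} : Finset C) := huv ▸ by simp
    simpa [(hu u hu').1, (hu u hu').2] using this
  · simp only [mem_image, not_exists, not_and]
    intro u hu' hdtu
    have : u ∈ ({d, t} : Finset C) := hdtu ▸ by simp
    simp [(hu u hu').1, (hu u hu').2] at this


def disagreementsDiff (V : Multiset (Ranking C)) (σ π : Ranking C) (S : Finset C) : ℤ :=
  disagreements V σ S - disagreements V π S

theorem topS_pair_eq_left {π : Ranking C} {a b : C} (hab : Before π a b) : topS π {a, b} = a :=
  topS_eq_coe_iff.2 ⟨by simp, by simp +contextual [hab]⟩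

theorem topS_triple_eq_left {π : Ranking C} {a b c : C} (hab : Before π a b)
    (hac : Before π a c) :
    topS π {a, b, c} = a :=
  topS_eq_coe_iff.2 ⟨by simp, by simp +contextual [hab, hac]⟩

theorem disagreements_moveAfter_pair_sub_le (h : Before r d x) {t : C} (hdt : Before r d t)
    (hxt : ¬ Before r x t) :
    disagreementsDiff V (moveAfter r d x) r {d, t} ≤
      2 * votesBefore V d t - Multiset.card V := by
  have hle := disagreements_le_sum_votesBefore V (topS_moveAfter_pair h hdt hxt)
    (s := {d}) (by simp [Finset.pair_comm])
  have hge := card_le_disagreements_add_votesBefore V (topS_pair_eq_left hdt) (b := t) (by simp)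
    hdt.ne.symm
  simp only [sum_singleton] at hle
  unfold disagreementsDiff
  omega

theorem disagreements_moveAfter_triple_sub_le (h : Before r d x) {t u b : C} (hdt : Before r d t)
    (hxt : ¬ Before r x t) (htu : Before r t u) (hb : b = t ∨ b = u) :
    disagreementsDiff V (moveAfter r d x) r {d, t, u} ≤
      min (Multiset.card V : ℤ) (votesBefore V d t + votesBefore V u t) + votesBefore V d b
        - Multiset.card V := by
  have hdu : d ≠ u := (hdt.trans htu).ne
  have hle := disagreements_le_sum_votesBefore V (topS_moveAfter_triple h hdt hxt htu)
    (s := {d, u}) (by intro c; simp; tauto)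
  have hge := card_le_disagreements_add_votesBefore V (topS_triple_eq_left hdt (hdt.trans htu))
    (b := b) (by rcases hb with rfl | rfl <;> simp)
    (by rcases hb with rfl | rfl; exacts [hdt.ne.symm, hdu.symm])
  have hcard := disagreements_le_card V (moveAfter r d x) {d, t, u}
  rw [sum_pair hdu] at hle
  unfold disagreementsDiff
  omega


theorem six_mul_disagreementsDiff_block_target_le (h : Before r d x)
    (hdx : 6 * votesBefore V d x ≤ Multiset.card V)
    (hA : ∀ a, Before r x a → 6 * votesBefore V a x ≤ Multiset.card V) :
    6 * (disagreementsDiff V (moveAfter r d x) r {d, x} +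
        ∑ a ∈ univ.filter (Before r x), disagreementsDiff V (moveAfter r d x) r {d, x, a}) ≤
      -4 * Multiset.card V - 3 * Multiset.card V * (univ.filter (Before r x)).card := by
  have hpair := disagreements_moveAfter_pair_sub_le (V := V) h h (Before.irrefl r x)
  have htriple : ∀ a ∈ univ.filter (Before r x),
      6 * disagreementsDiff V (moveAfter r d x) r {d, x, a} ≤ -3 * Multiset.card V := by
    intro a ha
    have hxa : Before r x a := (mem_filter.1 ha).2
    have := disagreements_moveAfter_triple_sub_le (V := V) h h (Before.irrefl r x) hxa (.inl rfl)
    have := min_le_right (Multiset.card V : ℤ) (votesBefore V d x + votesBefore V a x)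
    have := hA a hxa
    omega
  have hsum := sum_le_sum htriple
  rw [← mul_sum, sum_const, nsmul_eq_mul] at hsum
  linarith

theorem six_mul_disagreementsDiff_block_between_le (h : Before r d x) {z : C}
    (hdz : Before r d z) (hzx : Before r z x)
    (hdx : 6 * votesBefore V d x ≤ Multiset.card V)
    (hxz : 6 * votesBefore V x z ≤ Multiset.card V)
    (hA : ∀ a, Before r x a → 6 * votesBefore V a x ≤ Multiset.card V) :
    6 * (disagreementsDiff V (moveAfter r d x) r {d, z} +
        ∑ u ∈ univ.filter (Before r z), disagreementsDiff V (moveAfter r d x) r {d, z, u}) ≤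
      2 * Multiset.card V * (univ.filter fun u => Before r z u ∧ Before r u x).card -
        4 * Multiset.card V := by
  have hxz' : ¬ Before r x z := hzx.asymm
  have hdz6 : 6 * votesBefore V d z ≤ 2 * Multiset.card V := by
    have := votesBefore_le_add V d z x
    omega
  have hpair := disagreements_moveAfter_pair_sub_le (V := V) h hdz hxz'
  have htriple : ∀ u ∈ univ.filter (Before r z),
      6 * disagreementsDiff V (moveAfter r d x) r {d, z, u} ≤
        2 * Multiset.card V * ((if Before r u x then 1 else 0) - (if u = x then 1 else 0)) := by
    intro u hu
    have hzu : Before r z u := (mem_filter.1 hu).2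
    rcases eq_or_ne u x with rfl | hux
    · have := disagreements_moveAfter_triple_sub_le (V := V) h hdz hxz' hzu (b := u) (.inr rfl)
      have := min_le_right (Multiset.card V : ℤ) (votesBefore V d z + votesBefore V u z)
      simp only [Before.irrefl, if_false, if_true]
      omega
    rcases (before_or_before_of_ne r hux) with hux' | hxu
    · have := disagreements_moveAfter_triple_sub_le (V := V) h hdz hxz' hzu (b := z) (.inl rfl)
      have := min_le_left (Multiset.card V : ℤ) (votesBefore V d z + votesBefore V u z)
      simp only [hux', hux, if_false, if_true]
      omega
    · have := disagreements_moveAfter_triple_sub_le (V := V) h hdz hxz' hzu (b := z) (.inl rfl)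
      have := min_le_right (Multiset.card V : ℤ) (votesBefore V d z + votesBefore V u z)
      have := votesBefore_le_add V u z x
      have := hA u hxu
      simp only [hxu.asymm, hux, if_false]
      omega
  have hsum := sum_le_sum htriple
  rw [← mul_sum, ← mul_sum, sum_sub_distrib, sum_boole, sum_ite_eq', if_pos (mem_filter.2
    ⟨mem_univ x, hzx⟩), filter_filter] at hsum
  linarith


theorem six_mul_kDistV_moveAfter_sub_le (h : Before r d x)
    (hdx : 6 * votesBefore V d x ≤ Multiset.card V)
    (hJ : ∀ z, Before r d z → Before r z x → 6 * votesBefore V x z ≤ Multiset.card V)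
    (hA : ∀ a, Before r x a → 6 * votesBefore V a x ≤ Multiset.card V) :
    6 * ((kDistV 3 (moveAfter r d x) V : ℤ) - kDistV 3 r V) ≤
      Multiset.card V * (2 * ((univ.filter fun c => Before r d c ∧ Before r c x).card.choose 2)
        - 4 * (univ.filter fun c => Before r d c ∧ Before r c x).card - 4
        - 3 * (univ.filter (Before r x)).card) := by
  set J : Finset C := univ.filter fun c => Before r d c ∧ Before r c x
  have hK : univ.filter (fun t => Before r d t ∧ ¬ Before r x t) = insert x J := by
    ext t
    rcases eq_or_ne t x with rfl | htx
    · simp [J, h, Before.irrefl]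
    · simp [J, htx, not_before_iff r htx.symm]
  have hmemJ : ∀ z ∈ J, Before r d z ∧ Before r z x := fun z hz => by simpa [J] using hz
  have hxJ : x ∉ J := fun hx => Before.irrefl r x (hmemJ x hx).2
  have hbetween : ∀ z ∈ J,
      (univ.filter fun u => Before r z u ∧ Before r u x) = J.filter (Before r z) := by
    intro z hz
    have hdz := (hmemJ z hz).1
    ext u
    simp only [J, mem_filter, mem_univ, true_and]
    exact ⟨fun ⟨hzu, hux⟩ => ⟨⟨hdz.trans hzu, hux⟩, hzu⟩,
      fun ⟨⟨_, hux⟩, hzu⟩ => ⟨hzu, hux⟩⟩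
  have hblocks : ∑ z ∈ J, 6 * (disagreementsDiff V (moveAfter r d x) r {d, z} +
        ∑ u ∈ univ.filter (Before r z), disagreementsDiff V (moveAfter r d x) r {d, z, u}) ≤
      ∑ z ∈ J, (2 * (Multiset.card V : ℤ) * (J.filter (Before r z)).card
        - 4 * Multiset.card V) := by
    refine sum_le_sum fun z hz => ?_
    obtain ⟨hdz, hzx⟩ := hmemJ z hz
    rw [← hbetween z hz]
    exact six_mul_disagreementsDiff_block_between_le h hdz hzx hdx (hJ z hdz hzx) hA
  have hpairs : ∑ z ∈ J, ((J.filter (Before r z)).card : ℤ) = (J.card.choose 2 : ℕ) := by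
    exact_mod_cast sum_card_filter_lt_eq_choose_two r.injective J
  rw [sum_sub_distrib, ← mul_sum J (fun z => ((J.filter (Before r z)).card : ℤ)), hpairs,
    sum_const, nsmul_eq_mul] at hblocks
  have hsum : (kDistV 3 (moveAfter r d x) V : ℤ) - kDistV 3 r V =
      ∑ S ∈ univ.powerset.filter (·.card ≤ 3),
        disagreementsDiff V (moveAfter r d x) r S := by
    rw [kDistV_eq_sum_disagreements, kDistV_eq_sum_disagreements]
    push_cast
    rw [← sum_sub_distrib]
    rfl
  rw [hsum, sum_eq_sum_pair_add_sum_triple h _ fun S hS => by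
    simp [disagreementsDiff, disagreements, hS], hK, sum_insert hxJ, mul_add, mul_sum]
  have := six_mul_disagreementsDiff_block_target_le h hdx hA
  linarith

theorem four_mul_card_add_le_of_isKMedian (hV : V ≠ 0) (hr : IsKMedian 3 V r)
    (h : Before r d x) (hdx : 6 * votesBefore V d x ≤ Multiset.card V)
    (hJ : ∀ z, Before r d z → Before r z x → 6 * votesBefore V x z ≤ Multiset.card V)
    (hA : ∀ a, Before r x a → 6 * votesBefore V a x ≤ Multiset.card V) :
    4 * (univ.filter fun c => Before r d c ∧ Before r c x).card + 4
      + 3 * (univ.filter (Before r x)).card ≤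
      2 * (univ.filter fun c => Before r d c ∧ Before r c x).card.choose 2 := by
  have hn : (0 : ℤ) < Multiset.card V := by exact_mod_cast Multiset.card_pos.2 hV
  have hmed : (kDistV 3 r V : ℤ) ≤ kDistV 3 (moveAfter r d x) V := by exact_mod_cast hr _
  have := six_mul_kDistV_moveAfter_sub_le h hdx hJ hA
  have : (0 : ℤ) ≤
      2 * ((univ.filter fun c => Before r d c ∧ Before r c x).card.choose 2 : ℕ)
        - 4 * (univ.filter fun c => Before r d c ∧ Before r c x).card - 4
        - 3 * (univ.filter (Before r x)).card :=
    nonneg_of_mul_nonneg_right (by linarith) hn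
  omega

end Cost

theorem three_mul_lt_mul_sub_four_of_le_two_mul_choose {i j a : ℕ} (hji : j ≤ i)
    (h : 4 * j + 4 + 3 * a ≤ 2 * j.choose 2) : 3 * (a : ℤ) < i * (i - 4) := by
  have hj : 2 * j.choose 2 = j * (j - 1) := by
    rw [Nat.choose_two_right, Nat.mul_div_cancel' (Nat.even_mul_pred_self j).two_dvd]
  rcases Nat.eq_zero_or_pos j with rfl | hj0
  · simp at h
  have h' : (4 * j + 4 + 3 * a : ℤ) ≤ j * (j - 1) := by
    rw [← Nat.cast_pred hj0]
    exact_mod_cast hj ▸ h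
  have hji' : (j : ℤ) ≤ i := by exact_mod_cast hji
  have hj5 : (5 : ℤ) ≤ j := by nlinarith
  -- `i * (i - 4) - j * (j - 4) = (i - j) * (i + j - 4)`
  nlinarith [mul_nonneg (sub_nonneg.2 hji') (by linarith : (0 : ℤ) ≤ i + j - 4)]

/-- weak $5/6$-majority rule for the 3-wise Kemeny scheme. -/
theorem stmt16 {C : Type*} [Fintype C] [DecidableEq C]
    (V : Multiset (Ranking C)) (hV : V ≠ 0)
    (x : C) (hx : NonDirty V (5 / 6) x)
    (I : Finset C) (hI : ∀ z : C, z ∈ I ↔ z ≠ x ∧ AtLeastRatio V (5 / 6) z x)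
    (r : Ranking C) (hr : IsKMedian 3 V r)
    (hIx : ∀ z ∈ I, Before r z x)
    (hcard : (I.card : ℤ) * ((I.card : ℤ) - 4) ≤
      3 * ((Finset.univ.filter (fun z : C => Before r x z)).card : ℤ)) :
    ∀ y : C, y ≠ x → AtLeastRatio V (5 / 6) x y → Before r x y := by
  intro y hyx hxy
  by_contra hxy'
  have hlose : ∀ z, z ≠ x → z ∉ I → 6 * votesBefore V z x ≤ Multiset.card V :=
    fun z hzx hzI =>
    six_mul_votesBefore_le_of_atLeastRatio V hzx.symm <| (hx z hzx).resolve_right fun h =>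
      hzI ((hI z).2 ⟨hzx, h⟩)
  have hyI : y ∉ I := fun hy => not_atLeastRatio_of_atLeastRatio V hV hyx.symm hxy ((hI y).1 hy).2
  obtain ⟨d, hdD, hdmax⟩ := exists_max_image (univ.filter fun c => Before r c x ∧ c ∉ I) r
    ⟨y, mem_filter.2 ⟨mem_univ y, (not_before_iff r hyx.symm).1 hxy', hyI⟩⟩
  obtain ⟨hdx, hdI⟩ := (mem_filter.1 hdD).2
  have hJI : ∀ z, Before r d z → Before r z x → z ∈ I := fun z hdz hzx => by
    by_contra hzI
    exact absurd hdz (not_lt.2 (hdmax z (mem_filter.2 ⟨mem_univ z, hzx, hzI⟩)))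
  have key := four_mul_card_add_le_of_isKMedian hV hr hdx (hlose d hdx.ne hdI)
    (fun z hdz hzx => six_mul_votesBefore_le_of_atLeastRatio V hzx.ne ((hI z).1 (hJI z hdz hzx)).2)
    (fun a hxa => hlose a hxa.ne.symm fun haI => (hIx a haI).asymm hxa)
  have hJcard : (univ.filter fun c => Before r d c ∧ Before r c x).card ≤ I.card :=
    card_le_card fun z hz => hJI z (mem_filter.1 hz).2.1 (mem_filter.1 hz).2.2
  exact hcard.not_gt (three_mul_lt_mul_sub_four_of_le_two_mul_choose hJcard key)
end
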